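/- arXiv:2005.06195 — 3 statements merged into one kernel-verified Lean document; each statement's English description precedes it below -/
import Mathlib

section
/- Consider the 2×2 matrix A = [[β, 1−β], [−ηβ, 1−η(1−β)]] arising from gradient descent with momentum on a quadratic. For η ∈ (0,1) and β ∈ [0,1), both eigenvalues of A have absolute value strictly less than 1. -/
/-!
The matrix has trace `β + 1 - η(1 - β)` and determinant `β`. A real monic quadratic
`z² - t z + d` with `d < 1` and `|t| < 1 + d` has both roots in the open unit disc (Jury's
criterion): a non-real root comes with its conjugate, so `|z|² = d`; a real root lies in
`(-1, 1)` because the quadratic is positive at `±1` and its vertex `t / 2` lies between them.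
-/

open Matrix Polynomial

theorem abs_lt_one_of_sq_sub_mul_add_eq_zero {t d x : ℝ} (hd : d < 1) (ht : |t| < 1 + d)
    (hx : x ^ 2 - t * x + d = 0) : |x| < 1 := by
  obtain ⟨ht₁, ht₂⟩ := abs_lt.mp ht
  -- `x² - t x + d = (x - 1)(x + 1 - t) + (1 - t + d)`, and symmetrically at `-1`.
  refine abs_lt.mpr ⟨?_, ?_⟩
  · by_contra! h
    nlinarith [mul_nonneg (by linarith : 0 ≤ -1 - x) (by linarith : (0:ℝ) ≤ 1 - x - t)]
  · by_contra! h
    nlinarith [mul_nonneg (by linarith : 0 ≤ x - 1) (by linarith : (0:ℝ) ≤ x + 1 - t)]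

theorem Complex.normSq_eq_of_sq_sub_mul_add_eq_zero {t d : ℝ} {z : ℂ}
    (hz : z ^ 2 - t * z + d = 0) (him : z.im ≠ 0) : normSq z = d := by
  have hre := congrArg re hz
  have him' := congrArg im hz
  simp only [pow_two, sub_re, add_re, mul_re, ofReal_re, ofReal_im, zero_re, sub_im, add_im,
    mul_im, zero_im] at hre him'
  have htx : t = 2 * z.re := by
    refine mul_left_cancel₀ him ?_
    linear_combination -him'
  rw [normSq_apply]
  subst htx
  linear_combination -hre

theorem Complex.norm_lt_one_of_sq_sub_mul_add_eq_zero {t d : ℝ} (hd : d < 1) (ht : |t| < 1 + d)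
    {z : ℂ} (hz : z ^ 2 - t * z + d = 0) : ‖z‖ < 1 := by
  by_cases him : z.im = 0
  · obtain ⟨x, rfl⟩ : ∃ x : ℝ, z = x := ⟨z.re, ext rfl (by simp [him])⟩
    rw [norm_real, Real.norm_eq_abs]
    exact abs_lt_one_of_sq_sub_mul_add_eq_zero hd ht (by exact_mod_cast hz)
  · rw [← sq_lt_one_iff₀ (norm_nonneg z), ← normSq_eq_norm_sq,
      normSq_eq_of_sq_sub_mul_add_eq_zero hz him]
    exact hd

theorem Matrix.norm_lt_one_of_isRoot_charpoly_map_ofReal (M : Matrix (Fin 2) (Fin 2) ℝ)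
    (hdet : M.det < 1) (htr : |M.trace| < 1 + M.det) {z : ℂ}
    (hz : (M.map Complex.ofReal).charpoly.IsRoot z) : ‖z‖ < 1 := by
  refine Complex.norm_lt_one_of_sq_sub_mul_add_eq_zero hdet htr ?_
  change (M.map Complex.ofRealHom).charpoly.IsRoot z at hz
  rw [charpoly_map, charpoly_fin_two] at hz
  simpa using hz

/-- For `A = [[β, 1−β], [−ηβ, 1−η(1−β)]]` with step size `η ∈ (0,1)` and momentum
`β ∈ [0,1)`, every (complex) eigenvalue of `A` has absolute value strictly less
than `1`. -/
theorem momentum_matrix_eigenvalues_in_unit_disc (η β : ℝ)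
    (hη : η ∈ Set.Ioo (0 : ℝ) 1) (hβ : β ∈ Set.Ico (0 : ℝ) 1)
    (A : Matrix (Fin 2) (Fin 2) ℝ)
    (hA : A = !![β, 1 - β; -η * β, 1 - η * (1 - β)]) :
    ∀ z : ℂ, (A.map Complex.ofReal).charpoly.IsRoot z → ‖z‖ < 1 := by
  obtain ⟨hη₀, hη₁⟩ := hη
  obtain ⟨hβ₀, hβ₁⟩ := hβ
  have hdet : A.det = β := by rw [hA, det_fin_two_of]; ring
  have htr : A.trace = β + 1 - η * (1 - β) := by rw [hA, trace_fin_two_of]; ring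
  intro z hz
  refine A.norm_lt_one_of_isRoot_charpoly_map_ofReal (hdet ▸ hβ₁) ?_ hz
  rw [hdet, htr, abs_lt]
  constructor <;> nlinarith
end

section
/- With the same setup, the derivative of the ReLU loss with respect to the bias satisfies ∂L/∂b = ã_L φ(b/‖w‖) + c Φ(b/‖w‖). -/
open MeasureTheory ProbabilityTheory Matrix

/-- The standard multivariate Gaussian `N(0, I_L)` on `ℝ^L`. -/
noncomputable def stdGaussian (L : ℕ) : Measure (Fin L → ℝ) :=
  Measure.pi fun _ => gaussianReal 0 1

/-- Euclidean norm of a vector in `ℝ^L`. -/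
noncomputable def l2norm {L : ℕ} (v : Fin L → ℝ) : ℝ :=
  Real.sqrt (∑ i, (v i) ^ 2)

/-- The standard normal pdf `φ`. -/
noncomputable def phiPdf (t : ℝ) : ℝ :=
  Real.exp (-t ^ 2 / 2) / Real.sqrt (2 * Real.pi)

/-- The standard normal CDF `Φ`. -/
noncomputable def Phi (t : ℝ) : ℝ :=
  ∫ s in Set.Iic t, phiPdf s

/-! Since `Uᵀ` is orthogonal, `y = U x` is again standard Gaussian (its law has the radial
characteristic function `exp (-‖t‖² / 2)`), and in these coordinates `wᵀx = ‖w‖ y_L` and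
`aᵀx = ãᵀy`. The integrand becomes `1{y_L > -b/‖w‖} (ãᵀy + c)`. For `i ≠ L` the term
`E[y_i 1{y_L > u}]` vanishes because flipping the sign of `y_i` is another orthogonal map, so only
the one-dimensional integrals `E[1{y_L > u}] = Φ(-u)` and `E[y_L 1{y_L > u}] = φ(u)` survive, the
latter because `φ' = -t φ`. -/

open Set Filter WithLp

lemma l2norm_pos {n : ℕ} {v : Fin n → ℝ} (hv : v ≠ 0) : 0 < l2norm v := by
  have : l2norm v = ‖toLp 2 v‖ := by simp [l2norm, EuclideanSpace.norm_eq]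
  rw [this, norm_pos_iff]
  exact fun h => hv (by simpa using congrArg ofLp h)

lemma phiPdf_neg (t : ℝ) : phiPdf (-t) = phiPdf t := by simp [phiPdf]

lemma gaussianPDFReal_zero_one : gaussianPDFReal 0 1 = phiPdf := by
  ext t
  simp only [gaussianPDFReal, phiPdf, NNReal.coe_one, mul_one, sub_zero, div_eq_mul_inv]
  ring

lemma hasDerivAt_neg_phiPdf (t : ℝ) : HasDerivAt (fun t => -phiPdf t) (t * phiPdf t) t := by
  unfold phiPdf
  refine ((((hasDerivAt_pow 2 t).neg.div_const 2).exp).div_const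
    (Real.sqrt (2 * Real.pi))).neg.congr_deriv ?_
  simp only [Pi.neg_apply]
  push_cast
  ring

lemma integrable_mul_phiPdf : Integrable fun t : ℝ => t * phiPdf t := by
  unfold phiPdf
  convert (integrable_mul_exp_neg_mul_sq (b := 1 / 2) one_half_pos).div_const
    (Real.sqrt (2 * Real.pi)) using 2 with t
  rw [mul_div_assoc]
  congr 3
  ring

lemma tendsto_phiPdf_atTop : Tendsto phiPdf atTop (nhds 0) := by
  have h : Tendsto (fun t : ℝ => -t ^ 2 / 2) atTop atBot :=
    (tendsto_neg_atTop_atBot.comp (tendsto_pow_atTop two_ne_zero)).atBot_div_const two_pos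
  have := (Real.tendsto_exp_atBot.comp h).div_const (Real.sqrt (2 * Real.pi))
  rwa [zero_div] at this

lemma integral_Ioi_mul_phiPdf (u : ℝ) : ∫ t in Ioi u, t * phiPdf t = phiPdf u := by
  have := integral_Ioi_of_hasDerivAt_of_tendsto' (a := u)
    (fun t _ => hasDerivAt_neg_phiPdf t)
    integrable_mul_phiPdf.integrableOn tendsto_phiPdf_atTop.neg
  simpa using this

lemma setIntegral_gaussianReal {S : Set ℝ} (hS : MeasurableSet S) (f : ℝ → ℝ) :
    ∫ t in S, f t ∂gaussianReal 0 1 = ∫ t in S, phiPdf t * f t := by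
  rw [← integral_indicator hS, integral_gaussianReal_eq_integral_smul one_ne_zero,
    ← integral_indicator hS, gaussianPDFReal_zero_one]
  congr 1 with t
  by_cases ht : t ∈ S <;> simp [ht]

lemma setIntegral_Ioi_id_gaussianReal (u : ℝ) :
    ∫ t in Ioi u, t ∂gaussianReal 0 1 = phiPdf u := by
  simp_rw [setIntegral_gaussianReal measurableSet_Ioi, mul_comm (phiPdf _)]
  exact integral_Ioi_mul_phiPdf u

lemma gaussianReal_real_Ioi_neg (v : ℝ) : (gaussianReal 0 1).real (Ioi (-v)) = Phi v := by
  have := setIntegral_gaussianReal (measurableSet_Ioi (a := -v)) fun _ => 1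
  rw [setIntegral_const, smul_eq_mul, mul_one] at this
  simp_rw [this, mul_one, Phi, ← integral_comp_neg_Iic, phiPdf_neg]

lemma stdGaussian_eq_map_ofLp (n : ℕ) :
    stdGaussian n = (ProbabilityTheory.stdGaussian (EuclideanSpace ℝ (Fin n))).map
      (MeasurableEquiv.toLp 2 (Fin n → ℝ)).symm := by
  rw [← map_pi_eq_stdGaussian, Measure.map_map (by fun_prop) (by fun_prop)]
  exact Measure.map_id.symm

lemma integral_comp_mulVec_stdGaussian {E : Type*} [NormedAddCommGroup E] [NormedSpace ℝ E]
    {n : ℕ} {U : Matrix (Fin n) (Fin n) ℝ} (hU : Uᵀ * U = 1) (F : (Fin n → ℝ) → E) :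
    ∫ y, F (U *ᵥ y) ∂stdGaussian n = ∫ y, F y ∂stdGaussian n := by
  have hU' : U * Uᵀ = 1 := mul_eq_one_comm.mp hU
  let e : EuclideanSpace ℝ (Fin n) ≃ₗᵢ[ℝ] EuclideanSpace ℝ (Fin n) :=
    LinearEquiv.isometryOfInner
      (LinearEquiv.ofLinearMap (toEuclideanLin U) (toEuclideanLin Uᵀ)
        (by ext x i; simp [toEuclideanLin, mulVec_mulVec, hU'])
        (by ext x i; simp [toEuclideanLin, mulVec_mulVec, hU]))
      (fun x y => by
        simp [toEuclideanLin, EuclideanSpace.inner_eq_star_dotProduct, dotProduct_mulVec,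
          vecMul_mulVec, hU])
  have he : ∀ x, ofLp (e x) = U *ᵥ ofLp x := fun x => rfl
  rw [stdGaussian_eq_map_ofLp, integral_map_equiv, integral_map_equiv]
  simp only [MeasurableEquiv.toLp_symm_apply, ← he]
  exact MeasurePreserving.integral_comp' (f := e.toMeasurableEquiv)
    ⟨e.toMeasurableEquiv.measurable, stdGaussian_map e⟩ (fun x => F (ofLp x))

lemma integral_eval_mul_comp_eval_stdGaussian_of_ne {n : ℕ} {i ℓ : Fin n} (h : i ≠ ℓ)
    (g : ℝ → ℝ) : ∫ y, y i * g (y ℓ) ∂stdGaussian n = 0 := by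
  set d : Fin n → ℝ := fun j => if j = i then -1 else 1
  have hR : (diagonal d)ᵀ * diagonal d = 1 := by
    rw [diagonal_transpose, diagonal_mul_diagonal, ← diagonal_one]
    congr 1 with j
    by_cases hj : j = i <;> simp [d, hj]
  have := integral_comp_mulVec_stdGaussian hR fun y => y i * g (y ℓ)
  simp only [mulVec_diagonal, d, if_true, if_neg h.symm, one_mul, neg_mul, integral_neg] at this
  linarith

lemma integrable_eval_stdGaussian {n : ℕ} (i : Fin n) :
    Integrable (fun y => y i) (stdGaussian n) :=
  integrable_eval IsGaussian.integrable_id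

lemma integral_comp_eval_stdGaussian {n : ℕ} (ℓ : Fin n) {g : ℝ → ℝ} (hg : Measurable g) :
    ∫ y, g (y ℓ) ∂stdGaussian n = ∫ t, g t ∂gaussianReal 0 1 :=
  integral_comp_eval hg.aestronglyMeasurable

lemma integral_eval_mul_indicator_eval_stdGaussian {n : ℕ} (i ℓ : Fin n) {S : Set ℝ}
    (hS : MeasurableSet S) :
    ∫ y, y i * S.indicator 1 (y ℓ) ∂stdGaussian n =
      if i = ℓ then ∫ t in S, t ∂gaussianReal 0 1 else 0 := by
  split_ifs with h
  · subst h
    rw [integral_comp_eval_stdGaussian i (g := fun t => t * S.indicator 1 t)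
      (measurable_id.mul (measurable_one.indicator hS)), ← integral_indicator hS]
    congr 1 with t
    by_cases ht : t ∈ S <;> simp [ht]
  · exact integral_eval_mul_comp_eval_stdGaussian_of_ne h _

lemma integral_indicator_dotProduct_add_stdGaussian {n : ℕ} (ℓ : Fin n) {S : Set ℝ}
    (hS : MeasurableSet S) (v : Fin n → ℝ) (c : ℝ) :
    ∫ y, {y : Fin n → ℝ | y ℓ ∈ S}.indicator (fun y => v ⬝ᵥ y + c) y ∂stdGaussian n =
      v ℓ * ∫ t in S, t ∂gaussianReal 0 1 + c * (gaussianReal 0 1).real S := by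
  have hg : Measurable (S.indicator (1 : ℝ → ℝ)) := measurable_one.indicator hS
  have hint_eval : ∀ i, Integrable (fun y => y i * S.indicator 1 (y ℓ)) (stdGaussian n) :=
    fun i => (integrable_eval_stdGaussian i).mul_bdd
      (hg.comp (measurable_pi_apply ℓ)).aestronglyMeasurable (c := 1)
      (Eventually.of_forall fun y => by by_cases hy : y ℓ ∈ S <;> simp [hy])
  have hint_one : Integrable (fun y : Fin n → ℝ => S.indicator 1 (y ℓ)) (stdGaussian n) :=
    integrable_comp_eval ((integrable_const (1 : ℝ)).indicator hS)
  have hsplit : ∀ y : Fin n → ℝ, {y : Fin n → ℝ | y ℓ ∈ S}.indicator (fun y => v ⬝ᵥ y + c) y =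
      ∑ i, v i * (y i * S.indicator 1 (y ℓ)) + c * S.indicator 1 (y ℓ) := by
    intro y
    by_cases hy : y ℓ ∈ S <;> simp [hy, dotProduct]
  simp_rw [hsplit]
  rw [integral_add (integrable_finsetSum _ fun i _ => (hint_eval i).const_mul (v i))
      (hint_one.const_mul c), integral_finsetSum _ fun i _ => (hint_eval i).const_mul (v i),
    integral_const_mul, integral_comp_eval_stdGaussian ℓ hg, integral_indicator_one hS]
  simp_rw [integral_const_mul, integral_eval_mul_indicator_eval_stdGaussian _ ℓ hS]
  simp only [mul_ite, mul_zero, Finset.sum_ite_eq', Finset.mem_univ, if_true]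

/-- With `x ~ N(0, I_L)`, `U` orthogonal mapping `w ≠ 0` to `‖w‖ e_L`, `a = w − Γ`,
`c = b − Δ`, `ã = U a`, and bias derivative `∂L/∂b = E[1_{wᵀx+b>0}(aᵀx+c)]`:
`∂L/∂b = ã_L φ(b/‖w‖) + c Φ(b/‖w‖)`. -/
theorem relu_gradient_bias (L : ℕ) (w Γ : Fin (L + 1) → ℝ) (hw : w ≠ 0) (b Δ : ℝ)
    (U : Matrix (Fin (L + 1)) (Fin (L + 1)) ℝ) (hU : Uᵀ * U = 1)
    (hUw : U.mulVec w = Pi.single (Fin.last L) (l2norm w)) :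
    (∫ x, Set.indicator {x | w ⬝ᵥ x + b > 0}
        (fun x => (w - Γ) ⬝ᵥ x + (b - Δ)) x ∂ stdGaussian (L + 1)) =
      U.mulVec (w - Γ) (Fin.last L) * phiPdf (b / l2norm w) +
        (b - Δ) * Phi (b / l2norm w) := by
  have hs : 0 < l2norm w := l2norm_pos hw
  have hUt : Uᵀᵀ * Uᵀ = 1 := by rw [transpose_transpose]; exact mul_eq_one_comm.mp hU
  have hdot : ∀ v y, v ⬝ᵥ (Uᵀ *ᵥ y) = (U *ᵥ v) ⬝ᵥ y := fun v y => by
    rw [dotProduct_mulVec, vecMul_transpose]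
  have hrotate : ∀ y, {x | w ⬝ᵥ x + b > 0}.indicator (fun x => (w - Γ) ⬝ᵥ x + (b - Δ)) (Uᵀ *ᵥ y)
      = {y | y (Fin.last L) ∈ Ioi (-(b / l2norm w))}.indicator
          (fun y => (U *ᵥ (w - Γ)) ⬝ᵥ y + (b - Δ)) y := by
    intro y
    rw [← indicator_comp_right]
    congr 1
    · ext y
      simp only [mem_preimage, mem_ofPred_eq, mem_Ioi, hdot, hUw, single_dotProduct]
      rw [← neg_div, div_lt_iff₀' hs]
      constructor <;> intro h <;> linarith
    · ext y
      simp only [Function.comp_apply, hdot]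
  rw [← integral_comp_mulVec_stdGaussian hUt]
  simp_rw [hrotate, integral_indicator_dotProduct_add_stdGaussian _ measurableSet_Ioi,
    setIntegral_Ioi_id_gaussianReal, gaussianReal_real_Ioi_neg, phiPdf_neg]
end

section
/- The parameters w = 0 (in the limit) with any b < 0 are saddle points of the ReLU loss: as b/‖w‖ → −∞, the gradients with respect to both w and b tend to zero, while the loss at such points is not the global minimum when γ ≠ 0 or Δ > 0. -/
open MeasureTheory ProbabilityTheory Matrix

open Filter Topology
open scoped NNReal

/-! At `w = 0`, `b < 0` the neuron is dead: every gradient component is a combination of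
`Φ(t)`, `φ(t)` and `t φ(t)`, which vanish as `t → -∞` because `Φ` is the Gaussian CDF and `φ`
decays faster than any polynomial. The loss there is `½ E[max(γ y + Δ, 0)²]` with `y ~ N(0, 1)`,
positive because `γ y + Δ > 0` on a nonempty open set, while the loss at `(Γ, Δ)` is zero. -/

lemma phiPdf_eq_gaussianPDFReal : phiPdf = gaussianPDFReal 0 1 := by
  funext t
  simp [phiPdf, gaussianPDFReal_def, div_eq_inv_mul]

lemma Phi_eq_cdf_gaussianReal : Phi = cdf (gaussianReal 0 1) := by
  funext t
  rw [cdf_eq_real, measureReal_def, gaussianReal_apply_eq_integral 0 one_ne_zero,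
    ENNReal.toReal_ofReal (setIntegral_nonneg measurableSet_Iic
      fun s _ => gaussianPDFReal_nonneg 0 1 s), Phi, phiPdf_eq_gaussianPDFReal]

lemma tendsto_Phi_atBot : Tendsto Phi atBot (𝓝 0) :=
  Phi_eq_cdf_gaussianReal ▸ tendsto_cdf_atBot _

lemma tendsto_pow_mul_phiPdf_cocompact (n : ℕ) :
    Tendsto (fun t => t ^ n * phiPdf t) (cocompact ℝ) (𝓝 0) := by
  have h := (tendsto_rpow_abs_mul_exp_neg_mul_sq_cocompact (by norm_num : (0 : ℝ) < 1 / 2)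
    n).div_const (Real.sqrt (2 * Real.pi))
  rw [zero_div] at h
  refine squeeze_zero_norm (fun t => le_of_eq ?_) h
  have hφ : 0 ≤ phiPdf t := by unfold phiPdf; positivity
  rw [norm_mul, norm_pow, Real.norm_eq_abs, Real.norm_eq_abs, abs_of_nonneg hφ,
    Real.rpow_natCast, phiPdf, mul_div_assoc]
  ring_nf

lemma tendsto_pow_mul_phiPdf_atBot (n : ℕ) :
    Tendsto (fun t => t ^ n * phiPdf t) atBot (𝓝 0) :=
  (tendsto_pow_mul_phiPdf_cocompact n).mono_left atBot_le_cocompact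

lemma tendsto_phiPdf_atBot : Tendsto phiPdf atBot (𝓝 0) := by
  simpa using tendsto_pow_mul_phiPdf_atBot 0

lemma tendsto_mul_phiPdf_atBot : Tendsto (fun t => t * phiPdf t) atBot (𝓝 0) := by
  simpa using tendsto_pow_mul_phiPdf_atBot 1

lemma integrable_sq_max_affine_gaussianReal (μ : ℝ) (v : ℝ≥0) (γ Δ : ℝ) :
    Integrable (fun y => max (γ * y + Δ) 0 ^ 2) (gaussianReal μ v) :=
  (((memLp_id_gaussianReal' 2 (by simp)).const_mul γ).add (memLp_const Δ)).pos_part.integrable_sq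

lemma integral_sq_max_affine_gaussianReal_pos (μ : ℝ) {v : ℝ≥0} (hv : v ≠ 0) {γ Δ : ℝ}
    (h : γ ≠ 0 ∨ 0 < Δ) : 0 < ∫ y, max (γ * y + Δ) 0 ^ 2 ∂gaussianReal μ v := by
  have := (gaussianReal_absolutelyContinuous' μ hv).isOpenPosMeasure
  have hne : {y : ℝ | 0 < γ * y + Δ}.Nonempty := by
    rcases h with hγ | hΔ
    · exact ⟨(1 - Δ) / γ, show 0 < γ * ((1 - Δ) / γ) + Δ by rw [mul_div_cancel₀ _ hγ]; norm_num⟩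
    · exact ⟨0, by simpa using hΔ⟩
  rw [integral_pos_iff_support_of_nonneg (fun _ => sq_nonneg _)
    (integrable_sq_max_affine_gaussianReal μ v γ Δ)]
  refine (isOpen_lt continuous_const (by fun_prop)).measure_pos _ hne |>.trans_le
    (measure_mono fun y hy => ?_)
  exact (pow_pos (lt_max_of_lt_left hy) 2).ne'

lemma integral_relu_loss_zero_weight {n : ℕ} (i : Fin n) (γ Δ : ℝ) {b : ℝ} (hb : b ≤ 0) :
    ∫ x, (1 / 2) * (max ((0 : Fin n → ℝ) ⬝ᵥ x + b) 0 -
      max (Pi.single i γ ⬝ᵥ x + Δ) 0) ^ 2 ∂stdGaussian n =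
      (1 / 2) * ∫ y, max (γ * y + Δ) 0 ^ 2 ∂gaussianReal 0 1 := by
  simp only [zero_dotProduct, single_dotProduct, zero_add, max_eq_right hb, zero_sub, neg_sq]
  rw [integral_const_mul, _root_.stdGaussian,
    integral_comp_eval (X := fun _ => ℝ) (f := fun y => max (γ * y + Δ) 0 ^ 2)]
  exact (by fun_prop : Continuous fun y : ℝ => max (γ * y + Δ) 0 ^ 2).aestronglyMeasurable

/-- Dead-cone saddle points: as `t = b/‖w‖ → −∞`, the three gradient expressions
`ã_i Φ(t)` (for `i ≠ L`), `ã_L Φ(t) + (c − ã_L t) φ(t)`, and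
`ã_L φ(t) + c Φ(t)` all tend to `0` (for any fixed `ã_L`, `c`); yet for
`Γ = γ e_L` with `γ ≠ 0` or `Δ > 0`, the true ReLU loss at `w = 0`, `b < 0` is
strictly larger than the global minimum value at `(Γ, Δ)`, so such points are
saddle points, not global minima. -/
theorem dead_cone_saddle (L : ℕ) (γ Δ : ℝ) (Γ : Fin (L + 1) → ℝ)
    (hΓ : Γ = Pi.single (Fin.last L) γ) (h : γ ≠ 0 ∨ Δ > 0)
    (aL c : ℝ)
    (Lf : (Fin (L + 1) → ℝ) → ℝ → ℝ)
    (hLf : ∀ w b, Lf w b = ∫ x, (1 / 2) *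
      (max (w ⬝ᵥ x + b) 0 - max (Γ ⬝ᵥ x + Δ) 0) ^ 2 ∂ stdGaussian (L + 1)) :
    Filter.Tendsto (fun t => aL * Phi t) Filter.atBot (nhds 0) ∧
    Filter.Tendsto (fun t => aL * Phi t + (c - aL * t) * phiPdf t)
      Filter.atBot (nhds 0) ∧
    Filter.Tendsto (fun t => aL * phiPdf t + c * Phi t) Filter.atBot (nhds 0) ∧
    ∀ b < (0 : ℝ), Lf Γ Δ < Lf 0 b := by
  refine ⟨?_, ?_, ?_, fun b hb => ?_⟩
  · simpa using tendsto_Phi_atBot.const_mul aL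
  · have hlim := (tendsto_Phi_atBot.const_mul aL).add
      ((tendsto_phiPdf_atBot.const_mul c).sub (tendsto_mul_phiPdf_atBot.const_mul aL))
    simp only [mul_zero, sub_zero, add_zero] at hlim
    exact hlim.congr fun t => by ring
  · simpa using (tendsto_phiPdf_atBot.const_mul aL).add (tendsto_Phi_atBot.const_mul c)
  · have hmin : Lf Γ Δ = 0 := by simp [hLf]
    rw [hmin, hLf, hΓ, integral_relu_loss_zero_weight _ _ _ hb.le]
    exact mul_pos one_half_pos (integral_sq_max_affine_gaussianReal_pos 0 one_ne_zero h)
end
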